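/- Let N ≥ 2 and U_GHZ^N = (H ⊗ I^{⊗(N−1)}) · (|0⟩⟨0| ⊗ I^{⊗(N−1)} + |1⟩⟨1| ⊗ X^{⊗(N−1)}). Then for every bit string s = s₁⋯s_N ∈ {0,1}^N, (U_GHZ^N)ᵀ |s⟩ = (Z^{s₁} ⊗ X^{s₂} ⊗ ⋯ ⊗ X^{s_N}) |GHZ_N⟩; consequently applying the recovery operator V_s = Z^{s₁} ⊗ X^{s₂} ⊗ ⋯ ⊗ X^{s_N} gives V_s (U_GHZ^N)ᵀ |s⟩ = |GHZ_N⟩. -/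

import Mathlib

/-!
STATEMENT 6: Let N ≥ 2 and
U_GHZ^N = (H ⊗ I^{⊗(N−1)}) · (|0⟩⟨0| ⊗ I^{⊗(N−1)} + |1⟩⟨1| ⊗ X^{⊗(N−1)}).
Then for every bit string s = s₁⋯s_N ∈ {0,1}^N,
(U_GHZ^N)ᵀ |s⟩ = (Z^{s₁} ⊗ X^{s₂} ⊗ ⋯ ⊗ X^{s_N}) |GHZ_N⟩;
consequently applying the recovery operator V_s = Z^{s₁} ⊗ X^{s₂} ⊗ ⋯ ⊗ X^{s_N}
gives V_s (U_GHZ^N)ᵀ |s⟩ = |GHZ_N⟩.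

We represent (ℂ²)^{⊗N} ≅ ℂ^{2^N} by indexing coordinates with functions
`Fin N → Fin 2` (position k of the statement corresponds to index k-1 here).
-/

open Matrix

noncomputable section

/-- Pauli X matrix. -/
def X : Matrix (Fin 2) (Fin 2) ℂ := !![0, 1; 1, 0]

/-- Pauli Z matrix. -/
def Z : Matrix (Fin 2) (Fin 2) ℂ := !![1, 0; 0, -1]

/-- Hadamard matrix. -/
def H : Matrix (Fin 2) (Fin 2) ℂ := (Real.sqrt 2 : ℂ)⁻¹ • !![1, 1; 1, -1]

/-- Computational basis vector `|s⟩` of (ℂ²)^{⊗N}. -/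
def ketN {N : ℕ} (s : Fin N → Fin 2) : (Fin N → Fin 2) → ℂ :=
  fun t => if t = s then 1 else 0

/-- N-fold Kronecker (tensor) product of 2×2 matrices. -/
def tpow {N : ℕ} (M : Fin N → Matrix (Fin 2) (Fin 2) ℂ) :
    Matrix (Fin N → Fin 2) (Fin N → Fin 2) ℂ :=
  Matrix.of fun i j => ∏ k, M k (i k) (j k)

/-- `U_GHZ^N = (H ⊗ I^{⊗(N−1)}) · (|0⟩⟨0| ⊗ I^{⊗(N−1)} + |1⟩⟨1| ⊗ X^{⊗(N−1)})`. -/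
def UGHZ (N : ℕ) : Matrix (Fin N → Fin 2) (Fin N → Fin 2) ℂ :=
  tpow (fun k => if (k : ℕ) = 0 then H else 1) *
    (tpow (fun k => if (k : ℕ) = 0 then !![1, 0; 0, 0] else 1) +
      tpow (fun k => if (k : ℕ) = 0 then !![0, 0; 0, 1] else X))

/-- The N-qubit GHZ state `|GHZ_N⟩ = (|0⟩^{⊗N} + |1⟩^{⊗N})/√2`. -/
def ghzState (N : ℕ) : (Fin N → Fin 2) → ℂ :=
  (Real.sqrt 2 : ℂ)⁻¹ • (ketN (fun _ => 0) + ketN (fun _ => 1))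

/-- The recovery operator `V_s = Z^{s₁} ⊗ X^{s₂} ⊗ ⋯ ⊗ X^{s_N}`. -/
def Vrec {N : ℕ} (s : Fin N → Fin 2) :
    Matrix (Fin N → Fin 2) (Fin N → Fin 2) ℂ :=
  tpow (fun k => if (k : ℕ) = 0 then Z ^ (s k : ℕ) else X ^ (s k : ℕ))


lemma tpow_mul {N : ℕ} (A B : Fin N → Matrix (Fin 2) (Fin 2) ℂ) :
    tpow A * tpow B = tpow (fun k => A k * B k) := by
  ext i j
  simp only [tpow, Matrix.mul_apply, Matrix.of_apply]
  rw [Finset.prod_univ_sum]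
  exact Finset.sum_congr rfl (fun u _ => (Finset.prod_mul_distrib).symm)

lemma tpow_one {N : ℕ} : tpow (fun _ : Fin N => (1 : Matrix (Fin 2) (Fin 2) ℂ)) = 1 := by
  ext i j
  simp [tpow, Matrix.one_apply, Finset.prod_boole, funext_iff]

lemma tpow_apply_succ {m : ℕ} (M : Fin (m+2) → Matrix (Fin 2) (Fin 2) ℂ)
    (i j : Fin (m+2) → Fin 2) :
    tpow M i j = M 0 (i 0) (j 0) * ∏ k : Fin (m+1), M k.succ (i k.succ) (j k.succ) := by
  simp [tpow, Fin.prod_univ_succ]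

lemma mulVec_ketN {N : ℕ} (M : Matrix (Fin N → Fin 2) (Fin N → Fin 2) ℂ)
    (s : Fin N → Fin 2) : M.mulVec (ketN s) = fun t => M t s := by
  funext t
  simp [Matrix.mulVec, dotProduct, ketN]

lemma hX0 (a b : Fin 2) : (1 : Matrix (Fin 2) (Fin 2) ℂ) a b = (X ^ (a : ℕ)) b 0 := by
  fin_cases a <;> fin_cases b <;> simp [X, Matrix.one_apply]

lemma hX1 (a b : Fin 2) : X a b = (X ^ (a : ℕ)) b 1 := by
  fin_cases a <;> fin_cases b <;> simp [X, Matrix.one_apply]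

lemma hZ0 (a b : Fin 2) :
    (H * !![1, 0; 0, 0] : Matrix (Fin 2) (Fin 2) ℂ) a b = (Real.sqrt 2 : ℂ)⁻¹ * (Z ^ (a : ℕ)) b 0 := by
  fin_cases a <;> fin_cases b <;>
    simp [H, Z, Matrix.mul_fin_two, Matrix.one_apply, Matrix.smul_apply]

lemma hZ1 (a b : Fin 2) :
    (H * !![0, 0; 0, 1] : Matrix (Fin 2) (Fin 2) ℂ) a b = (Real.sqrt 2 : ℂ)⁻¹ * (Z ^ (a : ℕ)) b 1 := by
  fin_cases a <;> fin_cases b <;>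
    simp [H, Z, Matrix.mul_fin_two, Matrix.one_apply, Matrix.smul_apply]

lemma Vrec_sq {N : ℕ} (s : Fin N → Fin 2) : Vrec s * Vrec s = 1 := by
  rw [Vrec, tpow_mul]
  have sq1 : ∀ (M : Matrix (Fin 2) (Fin 2) ℂ) (a : ℕ), M * M = 1 → M ^ a * M ^ a = 1 := by
    intro M a h
    rw [← pow_add, ← two_mul, pow_mul, sq, h, one_pow]
  have hZZ : Z * Z = 1 := by
    simp only [Z, Matrix.mul_fin_two]
    norm_num
    exact Matrix.one_fin_two.symm
  have hXX : X * X = 1 := by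
    simp only [X, Matrix.mul_fin_two]
    norm_num
    exact Matrix.one_fin_two.symm
  have : (fun k : Fin N => (if (k : ℕ) = 0 then Z ^ (s k : ℕ) else X ^ (s k : ℕ)) *
      (if (k : ℕ) = 0 then Z ^ (s k : ℕ) else X ^ (s k : ℕ))) =
      fun _ : Fin N => (1 : Matrix (Fin 2) (Fin 2) ℂ) := by
    funext k
    split_ifs
    · exact sq1 _ _ hZZ
    · exact sq1 _ _ hXX
  rw [this, tpow_one]

theorem GHZ_recovery (N : ℕ) (hN : 2 ≤ N) (s : Fin N → Fin 2) :
    (UGHZ N)ᵀ.mulVec (ketN s) = (Vrec s).mulVec (ghzState N) ∧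
    (Vrec s).mulVec ((UGHZ N)ᵀ.mulVec (ketN s)) = ghzState N := by
  obtain ⟨m, rfl⟩ : ∃ m, N = m + 2 := ⟨N - 2, by omega⟩
  set c : ℂ := (Real.sqrt 2 : ℂ)⁻¹ with hc
  have key : (UGHZ (m+2))ᵀ.mulVec (ketN s) = (Vrec s).mulVec (ghzState (m+2)) := by
    funext t
    have hL : (UGHZ (m+2))ᵀ.mulVec (ketN s) t = UGHZ (m+2) s t := by
      rw [mulVec_ketN]; rfl
    rw [hL]
    have hR : (Vrec s).mulVec (ghzState (m+2)) t =
        c * (Vrec s t (fun _ => 0) + Vrec s t (fun _ => 1)) := by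
      rw [ghzState, Matrix.mulVec_smul, Matrix.mulVec_add, mulVec_ketN, mulVec_ketN]
      simp [smul_eq_mul, hc]
    rw [hR]
    rw [UGHZ, Matrix.mul_add, tpow_mul, tpow_mul, Matrix.add_apply]
    rw [tpow_apply_succ, tpow_apply_succ]
    rw [Vrec, tpow_apply_succ, tpow_apply_succ]
    simp only [Fin.val_zero, Fin.val_succ, Nat.succ_ne_zero, if_true, if_false,
      Nat.add_eq_zero, and_false, ite_false, ite_true]
    have e1 : (∏ k : Fin (m+1), ((1 : Matrix (Fin 2) (Fin 2) ℂ) * 1 : Matrix (Fin 2) (Fin 2) ℂ) (s k.succ) (t k.succ)) =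
        ∏ k : Fin (m+1), (X ^ (s k.succ : ℕ)) (t k.succ) 0 := by
      refine Finset.prod_congr rfl fun k _ => ?_
      rw [mul_one]; exact hX0 _ _
    have e2 : (∏ k : Fin (m+1), ((1 : Matrix (Fin 2) (Fin 2) ℂ) * X : Matrix (Fin 2) (Fin 2) ℂ) (s k.succ) (t k.succ)) =
        ∏ k : Fin (m+1), (X ^ (s k.succ : ℕ)) (t k.succ) 1 := by
      refine Finset.prod_congr rfl fun k _ => ?_
      rw [one_mul]; exact hX1 _ _
    rw [e1, e2, hZ0 (s 0) (t 0), hZ1 (s 0) (t 0)]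
    rw [hc]
    simp only [Fin.isValue, ↓reduceIte]
    ring
  refine ⟨key, ?_⟩
  rw [key, Matrix.mulVec_mulVec, Vrec_sq, Matrix.one_mulVec]
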